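/- arXiv:2401.08535 — 6 statements merged into one kernel-verified Lean document; each statement's English description precedes it below -/
import Mathlib

section
/- If I₁, ..., Iₙ are two-sided ideals of a ring R such that the product I₁·I₂·...·Iₙ is nil-essential, then each Iᵢ is nil-essential. -/
/-- A two-sided ideal `μ` is nilpotent if every product of `n` of its elements is `0`
for some fixed `n ≥ 1`, i.e. `μ ^ n = 0`. -/
def TIdealNilpotent {R : Type*} [Ring R] (μ : TwoSidedIdeal R) : Prop :=
  ∃ n : ℕ, 0 < n ∧ ∀ f : Fin n → R, (∀ i, f i ∈ μ) → (List.ofFn f).prod = 0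

def TNilEssential {R : Type*} [Ring R] (I : TwoSidedIdeal R) : Prop :=
  ∀ μ : TwoSidedIdeal R, I ⊓ μ = ⊥ → TIdealNilpotent μ

/-- The product `I 0 · I 1 · ... · I (n-1)` of a family of two-sided ideals: the
two-sided ideal generated by products of elements, one from each factor. -/
def tIdealProd {R : Type*} [Ring R] {n : ℕ} (I : Fin n → TwoSidedIdeal R) : TwoSidedIdeal R :=
  TwoSidedIdeal.span {x | ∃ f : Fin n → R, (∀ i, f i ∈ I i) ∧ x = (List.ofFn f).prod}

lemma TwoSidedIdeal.list_prod_mem {R : Type*} [Ring R] (J : TwoSidedIdeal R) {l : List R}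
    {x : R} (hxl : x ∈ l) (hxJ : x ∈ J) : l.prod ∈ J := by
  obtain ⟨s, t, rfl⟩ := List.append_of_mem hxl
  rw [List.prod_append, List.prod_cons, ← mul_assoc]
  exact J.mul_mem_right _ _ (J.mul_mem_left _ _ hxJ)

lemma tIdealProd_le {R : Type*} [Ring R] {n : ℕ} (I : Fin n → TwoSidedIdeal R) (i : Fin n) :
    tIdealProd I ≤ I i :=
  TwoSidedIdeal.span_le.2 fun _ ⟨_, hf, hx⟩ =>
    hx ▸ (I i).list_prod_mem (List.mem_ofFn.2 ⟨i, rfl⟩) (hf i)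

lemma TNilEssential.mono {R : Type*} [Ring R] {I J : TwoSidedIdeal R} (hIJ : I ≤ J)
    (hI : TNilEssential I) : TNilEssential J :=
  fun μ hJμ => hI μ (le_bot_iff.1 (hJμ ▸ inf_le_inf_right μ hIJ))

theorem stmt3_general {R : Type*} [Ring R] (n : ℕ) (I : Fin n → TwoSidedIdeal R)
    (h : TNilEssential (tIdealProd I)) : ∀ i, TNilEssential (I i) :=
  fun i => h.mono (tIdealProd_le I i)

theorem stmt3 {R : Type*} [Ring R] (n : ℕ) (hn : 0 < n) (I : Fin n → TwoSidedIdeal R)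
    (h : TNilEssential (tIdealProd I)) : ∀ i, TNilEssential (I i) :=
  stmt3_general n I h
end

section
/- Every maximal two-sided ideal M of a ring R which is nil-essential intersects every non-zero ideal of R non-trivially (i.e., M is essential). -/
lemma TIdealNilpotent.isNilpotent_of_mem {R : Type*} [Ring R] {μ : TwoSidedIdeal R}
    (hμ : TIdealNilpotent μ) {u : R} (hu : u ∈ μ) : IsNilpotent u := by
  obtain ⟨n, -, hn⟩ := hμ
  refine ⟨n, ?_⟩
  simpa only [List.ofFn_const, List.prod_replicate] using hn (fun _ => u) (fun _ => hu)

lemma TwoSidedIdeal.eq_top_of_isUnit_mem {R : Type*} [Ring R] (I : TwoSidedIdeal R) {m : R}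
    (hm : m ∈ I) (hunit : IsUnit m) : I = ⊤ := by
  obtain ⟨v, rfl⟩ := hunit
  rw [← I.one_mem_iff, ← v.inv_mul]
  exact I.mul_mem_left _ _ hm

lemma IsCoatom.le_of_forall_isNilpotent {R : Type*} [Ring R] {M : TwoSidedIdeal R}
    (hM : IsCoatom M) {μ : TwoSidedIdeal R} (hμ : ∀ u ∈ μ, IsNilpotent u) : μ ≤ M := by
  by_contra hle
  have hsup : M ⊔ μ = ⊤ := codisjoint_iff.mp (hM.not_le_iff_codisjoint.mp hle)
  obtain ⟨m, hm, u, hu, hmu⟩ := TwoSidedIdeal.mem_sup.mp ((M ⊔ μ).one_mem hsup)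
  have hunit : IsUnit m := eq_sub_of_add_eq hmu ▸ (hμ u hu).isUnit_one_sub
  exact hM.ne_top (M.eq_top_of_isUnit_mem hm hunit)

theorem stmt8 {R : Type*} [Ring R] (M : TwoSidedIdeal R) (hM : IsCoatom M)
    (h : TNilEssential M) : ∀ μ : TwoSidedIdeal R, μ ≠ ⊥ → M ⊓ μ ≠ ⊥ := by
  intro μ hμ hdisj
  have hle : μ ≤ M := hM.le_of_forall_isNilpotent fun _ => (h μ hdisj).isNilpotent_of_mem
  exact hμ (inf_eq_right.mpr hle ▸ hdisj)
end

section
/- Let R be a commutative Noetherian ring and I a non-zero ideal. Then I is nil-essential if and only if for every non-nilpotent element x ∈ R there exists r ∈ R such that rx ∈ I and rx ≠ 0. -/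
/-!
In a Noetherian ring every ideal is finitely generated, so an ideal is nilpotent exactly when it
lies in the nilradical. Hence `I` is nil-essential iff every ideal meeting `I` trivially consists
of nilpotent elements, and it suffices to test principal ideals `(x)`: `I ∩ (x) = 0` says that no
non-zero multiple of `x` lies in `I`.
-/

def IdealNilpotentC {A : Type*} [CommRing A] (μ : Ideal A) : Prop :=
  ∃ n : ℕ, 0 < n ∧ μ ^ n = ⊥

def NilEssentialC {A : Type*} [CommRing A] (I : Ideal A) : Prop :=
  ∀ μ : Ideal A, I ⊓ μ = ⊥ → IdealNilpotentC μ

theorem idealNilpotentC_iff_isNilpotent {A : Type*} [CommRing A] {μ : Ideal A} :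
    IdealNilpotentC μ ↔ IsNilpotent μ := by
  refine ⟨fun ⟨n, _, hn⟩ ↦ ⟨n, hn⟩, fun ⟨n, hn⟩ ↦ ⟨n + 1, n.succ_pos, ?_⟩⟩
  rw [pow_succ, hn, zero_mul, Submodule.zero_eq_bot]

theorem Ideal.inf_span_singleton_eq_bot_iff {A : Type*} [CommSemiring A] {I : Ideal A} {x : A} :
    I ⊓ span {x} = ⊥ ↔ ∀ r : A, r * x ∈ I → r * x = 0 := by
  simp only [eq_bot_iff, SetLike.le_def, Submodule.mem_inf, mem_span_singleton',
    Submodule.mem_bot]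
  constructor
  · intro h r hr
    exact h ⟨hr, r, rfl⟩
  · rintro h y ⟨hy, r, rfl⟩
    exact h r hy

theorem nilEssentialC_iff_forall_inf_eq_bot_le_nilradical {R : Type*} [CommRing R]
    [IsNoetherianRing R] (I : Ideal R) :
    NilEssentialC I ↔ ∀ μ : Ideal R, I ⊓ μ = ⊥ → μ ≤ nilradical R := by
  refine forall_congr' fun μ ↦ imp_congr_right fun _ ↦ ?_
  rw [idealNilpotentC_iff_isNilpotent, Ideal.FG.isNilpotent_iff_le_nilradical (IsNoetherian.noetherian μ)]

theorem forall_inf_eq_bot_le_nilradical_iff {A : Type*} [CommRing A] (I : Ideal A) :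
    (∀ μ : Ideal A, I ⊓ μ = ⊥ → μ ≤ nilradical A) ↔
      ∀ x : A, ¬ IsNilpotent x → ∃ r : A, r * x ∈ I ∧ r * x ≠ 0 := by
  have principal : (∀ x : A, ¬ IsNilpotent x → ∃ r : A, r * x ∈ I ∧ r * x ≠ 0) ↔
      ∀ x : A, I ⊓ Ideal.span {x} = ⊥ → IsNilpotent x := by
    simp only [Ideal.inf_span_singleton_eq_bot_iff]
    refine forall_congr' fun x ↦ not_imp_comm.trans (imp_congr_left ?_)
    simp only [not_exists, not_and, not_not]
  rw [principal]
  constructor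
  · intro h x hx
    exact h _ hx (Ideal.mem_span_singleton_self x)
  · intro h μ hμ x hx
    refine h x (eq_bot_iff.2 (le_trans ?_ hμ.le))
    exact inf_le_inf_left I ((Ideal.span_singleton_le_iff_mem μ).2 hx)

theorem stmt11_general {R : Type*} [CommRing R] [IsNoetherianRing R] (I : Ideal R) :
    NilEssentialC I ↔
      ∀ x : R, ¬ IsNilpotent x → ∃ r : R, r * x ∈ I ∧ r * x ≠ 0 :=
  (nilEssentialC_iff_forall_inf_eq_bot_le_nilradical I).trans
    (forall_inf_eq_bot_le_nilradical_iff I)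

theorem stmt11 {R : Type*} [CommRing R] [IsNoetherianRing R] (I : Ideal R) (hI : I ≠ ⊥) :
    NilEssentialC I ↔
      ∀ x : R, ¬ IsNilpotent x → ∃ r : R, r * x ∈ I ∧ r * x ≠ 0 :=
  stmt11_general I
end

section
/- Let R be a commutative Noetherian ring and I ⊆ J ideals with I nil-essential in J. Then for every a ∈ J, the ideal quotient (I : a) = {r ∈ R : ra ∈ I} is nil-essential in R. -/
def NilEssentialInC {A : Type*} [CommRing A] (I K : Ideal A) : Prop :=
  ∀ μ : Ideal A, μ ≤ K → I ⊓ μ = ⊥ → IdealNilpotentC μ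

/-!
If `(I : a) ⊓ μ = 0`, then `xa ∈ I` forces `x = 0` for `x ∈ μ`. Hence `I ⊓ aμ = 0` with `aμ ⊆ J`,
so `aμ` is nilpotent, and since `a` is a non-zero-divisor on `μ`, `a^n μ^n = 0` gives `μ^n = 0`.
-/

open Ideal

section

variable {R : Type*} [CommRing R] {I μ : Ideal R} {a : R}

theorem eq_zero_of_colon_inf_eq_bot (hμ : I.colon (span {a}) ⊓ μ = ⊥) {x : R} (hx : x ∈ μ)
    (hxa : x * a ∈ I) : x = 0 := by
  have hmem : x ∈ I.colon (span {a}) ⊓ μ := ⟨mem_colon_span_singleton.mpr hxa, hx⟩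
  rw [hμ] at hmem
  simpa using hmem

theorem inf_span_singleton_mul_eq_bot_of_colon_inf_eq_bot
    (hμ : I.colon (span {a}) ⊓ μ = ⊥) : I ⊓ (span {a} * μ) = ⊥ := by
  refine eq_bot_iff.mpr fun x ⟨hxI, hxaμ⟩ => ?_
  obtain ⟨y, hy, rfl⟩ := mem_span_singleton_mul.mp hxaμ
  rw [mul_comm] at hxI
  simp [eq_zero_of_colon_inf_eq_bot hμ hy hxI]

theorem eq_zero_of_pow_mul_eq_zero (hinj : ∀ x ∈ μ, a * x = 0 → x = 0) (k : ℕ) {x : R}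
    (hx : x ∈ μ) (hax : a ^ k * x = 0) : x = 0 := by
  induction k generalizing x with
  | zero => simpa using hax
  | succ k ih =>
    refine hinj x hx (ih (μ.mul_mem_left a hx) ?_)
    rw [← hax]
    ring

theorem IdealNilpotentC.of_span_singleton_mul (hinj : ∀ x ∈ μ, a * x = 0 → x = 0)
    (h : IdealNilpotentC (span {a} * μ)) : IdealNilpotentC μ := by
  obtain ⟨n, hn, hpow⟩ := h
  refine ⟨n, hn, eq_bot_iff.mpr fun x hx => ?_⟩
  have hmem : a ^ n * x ∈ (span {a} * μ) ^ n := by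
    rw [mul_pow, span_singleton_pow]
    exact mul_mem_mul (mem_span_singleton_self _) hx
  rw [hpow, mem_bot] at hmem
  exact mem_bot.mpr (eq_zero_of_pow_mul_eq_zero hinj n (pow_le_self hn.ne' hx) hmem)

end

theorem stmt15_general {R : Type*} [CommRing R] (I J : Ideal R)
    (h : NilEssentialInC I J) :
    ∀ a ∈ J, NilEssentialC (I.colon (Ideal.span {a})) := by
  intro a ha μ hμ
  have hinj : ∀ x ∈ μ, a * x = 0 → x = 0 := fun x hx hax =>
    eq_zero_of_colon_inf_eq_bot hμ hx (by rw [mul_comm, hax]; exact I.zero_mem)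
  have haμJ : span {a} * μ ≤ J := mul_le_left.trans ((span_singleton_le_iff_mem J).mpr ha)
  exact .of_span_singleton_mul hinj
    (h _ haμJ (inf_span_singleton_mul_eq_bot_of_colon_inf_eq_bot hμ))

theorem stmt15 {R : Type*} [CommRing R] [IsNoetherianRing R] (I J : Ideal R)
    (hIJ : I ≤ J) (h : NilEssentialInC I J) :
    ∀ a ∈ J, NilEssentialC (I.colon (Ideal.span {a})) :=
  stmt15_general I J h
end

section
/- Let R be a commutative Noetherian ring, S the set of non-zero-divisors of R, and I an ideal of R. Then I is nil-essential in R if and only if the localized ideal S⁻¹I is nil-essential in S⁻¹R. -/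
theorem idealNilpotentC_map_iff_of_injective {A B : Type*} [CommRing A] [CommRing B]
    {f : A →+* B} (hf : Function.Injective f) (μ : Ideal A) :
    IdealNilpotentC (μ.map f) ↔ IdealNilpotentC μ := by
  simp only [IdealNilpotentC, ← Ideal.map_pow, Ideal.map_eq_bot_iff_of_injective hf]

section Localization

variable {R S : Type*} [CommRing R] [CommRing S] [Algebra R S]
  {M : Submonoid R} [IsLocalization M S]

theorem NilEssentialC.map_algebraMap (hM : M ≤ nonZeroDivisors R) {I : Ideal R}
    (hI : NilEssentialC I) : NilEssentialC (I.map (algebraMap R S)) := by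
  intro J hJ
  have hinj := IsLocalization.injective S hM
  have hunder : I ⊓ J.under R = ⊥ := by
    refine eq_bot_iff.mpr fun x hx ↦ ?_
    have : algebraMap R S x ∈ I.map (algebraMap R S) ⊓ J :=
      ⟨Ideal.mem_map_of_mem _ hx.1, hx.2⟩
    rw [hJ, Ideal.mem_bot, ← map_zero (algebraMap R S)] at this
    exact hinj this
  rw [← IsLocalization.map_under M S J, idealNilpotentC_map_iff_of_injective hinj]
  exact hI _ hunder

theorem NilEssentialC.of_map_algebraMap (hM : M ≤ nonZeroDivisors R) {I : Ideal R}
    (hI : NilEssentialC (I.map (algebraMap R S))) : NilEssentialC I := by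
  intro J hJ
  rw [← idealNilpotentC_map_iff_of_injective (IsLocalization.injective S hM)]
  exact hI _ (by rw [← IsLocalization.map_inf M, hJ, Ideal.map_bot])

theorem nilEssentialC_map_algebraMap_iff (hM : M ≤ nonZeroDivisors R) (I : Ideal R) :
    NilEssentialC (I.map (algebraMap R S)) ↔ NilEssentialC I :=
  ⟨.of_map_algebraMap hM, .map_algebraMap hM⟩

end Localization

theorem stmt17_general {R : Type*} [CommRing R] (I : Ideal R) :
    NilEssentialC I ↔
      NilEssentialC (I.map (algebraMap R (Localization (nonZeroDivisors R)))) :=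
  (nilEssentialC_map_algebraMap_iff le_rfl I).symm

theorem stmt17 {R : Type*} [CommRing R] [IsNoetherianRing R] (I : Ideal R) :
    NilEssentialC I ↔
      NilEssentialC (I.map (algebraMap R (Localization (nonZeroDivisors R)))) :=
  stmt17_general I
end

section
/- Let R be a commutative Noetherian ring, S a multiplicatively closed subset of R containing no zero divisors, and I an ideal of R. If S⁻¹I is nil-essential in S⁻¹R, then I is nil-essential in R. -/
theorem IdealNilpotentC.of_map {A B : Type*} [CommRing A] [CommRing B] {f : A →+* B}
    (hf : Function.Injective f) {μ : Ideal A} (h : IdealNilpotentC (μ.map f)) :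
    IdealNilpotentC μ := by
  obtain ⟨n, hn, hμn⟩ := h
  exact ⟨n, hn, (Ideal.map_eq_bot_iff_of_injective hf).mp (by rwa [Ideal.map_pow])⟩

theorem NilEssentialC.of_map_algebraMap_s18 {R L : Type*} [CommRing R] [CommRing L] [Algebra R L]
    (S : Submonoid R) [IsLocalization S L] (hS : S ≤ nonZeroDivisors R) {I : Ideal R}
    (h : NilEssentialC (I.map (algebraMap R L))) : NilEssentialC I := by
  intro μ hμ
  refine (h (μ.map (algebraMap R L)) ?_).of_map (IsLocalization.injective L hS)
  rw [← IsLocalization.map_inf S, hμ, Ideal.map_bot]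

theorem stmt18_general {R : Type*} [CommRing R] (S : Submonoid R)
    (hS : S ≤ nonZeroDivisors R) (I : Ideal R)
    (h : NilEssentialC (I.map (algebraMap R (Localization S)))) :
    NilEssentialC I :=
  h.of_map_algebraMap_s18 S hS

theorem stmt18 {R : Type*} [CommRing R] [IsNoetherianRing R] (S : Submonoid R)
    (hS : S ≤ nonZeroDivisors R) (I : Ideal R)
    (h : NilEssentialC (I.map (algebraMap R (Localization S)))) :
    NilEssentialC I :=
  stmt18_general S hS I h
end
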